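/- In the S-module N = S^2/U, the submodules sN, tN, and mN = (s,t)N all coincide, and this common submodule has length 1 as an S-module. -/

import Mathlib

set_option maxHeartbeats 1000000
set_option synthInstance.maxHeartbeats 400000

open CategoryTheory MvPolynomial

noncomputable section

/-- The ideal `(s², st, t²)` of the polynomial ring `K[s,t]`. -/
def sIdeal (K : Type) [Field K] : Ideal (MvPolynomial (Fin 2) K) :=
  Ideal.span {(X 0) ^ 2, (X 0) * (X 1), (X 1) ^ 2}

/-- The ring `S = K[s,t]/(s², st, t²)`. -/
abbrev Sring (K : Type) [Field K] : Type := MvPolynomial (Fin 2) K ⧸ sIdeal K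

/-- The image `s` of the first variable in `S`. -/
def sElt (K : Type) [Field K] : Sring K := Ideal.Quotient.mk _ (X 0)

/-- The image `t` of the second variable in `S`. -/
def tElt (K : Type) [Field K] : Sring K := Ideal.Quotient.mk _ (X 1)

/-- The submodule `U` of `S²` generated by `(t,0)`, `(0,s)` and `(s,t)`. -/
def Usub (K : Type) [Field K] : Submodule (Sring K) (Fin 2 → Sring K) :=
  Submodule.span _ {![tElt K, 0], ![0, sElt K], ![sElt K, tElt K]}

/-- The module `N = S²/U`. -/
abbrev Nmod (K : Type) [Field K] : Type := (Fin 2 → Sring K) ⧸ Usub K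

/-- The maximal ideal `m = (s,t)` of `S`. -/
def mIdeal (K : Type) [Field K] : Ideal (Sring K) := Ideal.span {sElt K, tElt K}

/-- The matrix `X̄` with rows `(s,0,t,0)` and `(0,s,0,t)`. -/
def Xbar (K : Type) [Field K] : Matrix (Fin 2) (Fin 4) (Sring K) :=
  !![sElt K, 0, tElt K, 0; 0, sElt K, 0, tElt K]

/-- The matrix `Ȳ = (sI₄ | tI₄)`. -/
def Ybar (K : Type) [Field K] : Matrix (Fin 4) (Fin 8) (Sring K) :=
  fun i j => if (j : ℕ) = (i : ℕ) then sElt K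
    else if (j : ℕ) = (i : ℕ) + 4 then tElt K else 0

/-- The `S`-linear map `v ↦ v A` on row vectors with entries in an `S`-module `M`,
for a matrix `A` over `S`. -/
def rowVecMulMap {S : Type} [CommRing S] {M : Type} [AddCommGroup M] [Module S M]
    {a b : ℕ} (A : Matrix (Fin a) (Fin b) S) : (Fin a → M) →ₗ[S] (Fin b → M) where
  toFun v := fun j => ∑ i, A i j • v i
  map_add' u v := by
    funext j
    simp [smul_add, Finset.sum_add_distrib]
  map_smul' c v := by
    funext j
    show (∑ i, A i j • (c • v) i) = c • ∑ i, A i j • v i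
    rw [Finset.smul_sum]
    refine Finset.sum_congr rfl fun i _ => ?_
    rw [Pi.smul_apply, smul_comm]


/-! Write `e₁, e₂` for the images in `N` of the standard basis of `S²`. The generators of `U`
say `t e₁ = 0`, `s e₂ = 0` and `t e₂ = -s e₁`, so `sN`, `tN` and `mN` are all the cyclic module
`S ∙ s e₁`. Since `m² = 0`, it is killed by the maximal ideal `m`, hence simple as soon as
`s e₁ ≠ 0`, i.e. `(s, 0) ∉ U`. This last point comes from the two maps `S → K[ε]` sending
`(s, t)` to `(ε, 0)` and to `(0, ε)`: comparing `ε`-coefficients, a relation `x s + y t = 0`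
forces `x, y ∈ m`, while `(s, 0) = a (t, 0) + b (0, s) + c (s, t)` would give
`(c - 1) s + a t = 0` and `b s + c t = 0`, so `1 = c - (c - 1) ∈ m`. -/

section Ring

variable {K : Type} [Field K]

lemma sElt_mul_sElt : sElt K * sElt K = 0 := by
  rw [sElt, ← map_mul, Ideal.Quotient.eq_zero_iff_mem]
  exact Ideal.subset_span (by simp [sq])

lemma sElt_mul_tElt : sElt K * tElt K = 0 := by
  rw [sElt, tElt, ← map_mul, Ideal.Quotient.eq_zero_iff_mem]
  exact Ideal.subset_span (by simp)

lemma Sring.algHom_ext {A : Type} [Semiring A] [Algebra K A] {f g : Sring K →ₐ[K] A}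
    (hs : f (sElt K) = g (sElt K)) (ht : f (tElt K) = g (tElt K)) : f = g :=
  Ideal.Quotient.algHom_ext K <| MvPolynomial.algHom_ext fun i ↦ by fin_cases i <;> assumption

variable {A : Type} [CommRing A] [Algebra K A]

def Sring.lift (a b : A) (haa : a * a = 0) (hab : a * b = 0) (hbb : b * b = 0) :
    Sring K →ₐ[K] A :=
  Ideal.Quotient.liftₐ (sIdeal K) (aeval ![a, b]) fun _ hp ↦ by
    refine (Ideal.span_le (I := RingHom.ker (aeval ![a, b]))).2 ?_ hp
    rintro _ (rfl | rfl | rfl) <;> simp [sq, haa, hab, hbb]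

variable {a b : A} {haa : a * a = 0} {hab : a * b = 0} {hbb : b * b = 0}

lemma Sring.lift_mk (p : MvPolynomial (Fin 2) K) :
    Sring.lift a b haa hab hbb (Ideal.Quotient.mk _ p) = aeval ![a, b] p :=
  Ideal.Quotient.liftₐ_apply _ _ _ _

@[simp] lemma Sring.lift_sElt : Sring.lift a b haa hab hbb (sElt K) = a := by
  simp [sElt, Sring.lift_mk]

@[simp] lemma Sring.lift_tElt : Sring.lift a b haa hab hbb (tElt K) = b := by
  simp [tElt, Sring.lift_mk]

end Ring

section Augmentation

variable {K : Type} [Field K]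

lemma sElt_mem_mIdeal : sElt K ∈ mIdeal K := Ideal.subset_span (Set.mem_insert _ _)

lemma tElt_mem_mIdeal : tElt K ∈ mIdeal K := Ideal.subset_span (Set.mem_insert_of_mem _ rfl)

def Sring.augmentation : Sring K →ₐ[K] K :=
  Sring.lift 0 0 (mul_zero 0) (mul_zero 0) (mul_zero 0)

lemma mIdeal_eq_ker_augmentation : mIdeal K = RingHom.ker (Sring.augmentation (K := K)) := by
  refine le_antisymm (Ideal.span_le.2 ?_) fun r hr ↦ ?_
  · rintro _ (rfl | rfl) <;> simp [Sring.augmentation]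
  have hmk : Ideal.Quotient.mkₐ K (mIdeal K) =
      (Algebra.ofId K _).comp Sring.augmentation := by
    apply Sring.algHom_ext <;>
      · rw [AlgHom.comp_apply, Sring.augmentation]
        simp [Ideal.Quotient.eq_zero_iff_mem, sElt_mem_mIdeal, tElt_mem_mIdeal]
  rw [← Ideal.Quotient.eq_zero_iff_mem]
  simpa [RingHom.mem_ker.1 hr] using congr($hmk r)

lemma mIdeal_isMaximal : (mIdeal K).IsMaximal :=
  mIdeal_eq_ker_augmentation (K := K) ▸ RingHom.ker_isMaximal_of_surjective _
    fun c ↦ ⟨algebraMap K _ c, AlgHom.commutes _ c⟩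

lemma mem_mIdeal_of_mul_sElt_add_mul_tElt_eq_zero {x y : Sring K}
    (h : x * sElt K + y * tElt K = 0) : x ∈ mIdeal K ∧ y ∈ mIdeal K := by
  let fs : Sring K →ₐ[K] DualNumber K := Sring.lift DualNumber.eps 0 (by simp) (by simp) (by simp)
  let ft : Sring K →ₐ[K] DualNumber K := Sring.lift 0 DualNumber.eps (by simp) (by simp) (by simp)
  have hfs : (TrivSqZeroExt.fstHom K K K).comp fs = Sring.augmentation := by
    apply Sring.algHom_ext <;> simp [fs, Sring.augmentation]
  have hft : (TrivSqZeroExt.fstHom K K K).comp ft = Sring.augmentation := by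
    apply Sring.algHom_ext <;> simp [ft, Sring.augmentation]
  have hx : Sring.augmentation x = 0 := by
    rw [← hfs]
    simpa [fs] using congr(TrivSqZeroExt.snd (fs $h))
  have hy : Sring.augmentation y = 0 := by
    rw [← hft]
    simpa [ft] using congr(TrivSqZeroExt.snd (ft $h))
  rw [mIdeal_eq_ker_augmentation]
  exact ⟨hx, hy⟩

end Augmentation

lemma isSimpleModule_span_singleton_of_ideal_smul_eq_zero {R M : Type*} [CommRing R]
    [AddCommGroup M] [Module R M] {I : Ideal R} (hI : I.IsMaximal) {x : M} (hx : x ≠ 0)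
    (hIx : ∀ r ∈ I, r • x = 0) : IsSimpleModule R (R ∙ x) := by
  have hann : Ideal.torsionOf R M x = I :=
    (hI.eq_of_le (mt (Ideal.torsionOf_eq_top_iff R x).1 hx) hIx).symm
  exact isSimpleModule_iff_quot_maximal.2 ⟨I, hI,
    ⟨(Ideal.quotTorsionOfEquivSpanSingleton R M x).symm.trans (Submodule.quotEquivOfEq _ _ hann)⟩⟩

lemma exists_compositionSeries_of_isMaximal_bot_top {X : Type*} [Lattice X] [BoundedOrder X]
    [JordanHolderLattice X] (h : JordanHolderLattice.IsMaximal (⊥ : X) ⊤) :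
    ∃ c : CompositionSeries X, c.head = ⊥ ∧ c.last = ⊤ ∧ c.length = 1 :=
  ⟨(RelSeries.singleton _ ⊥).snoc ⊤ h, RelSeries.head_snoc .., RelSeries.last_snoc .., rfl⟩

namespace Nmod

def e₁ (K : Type) [Field K] : Nmod K := Submodule.Quotient.mk ![1, 0]

def e₂ (K : Type) [Field K] : Nmod K := Submodule.Quotient.mk ![0, 1]

variable {K : Type} [Field K]

lemma span_e₁_e₂ : Submodule.span (Sring K) {e₁ K, e₂ K} = ⊤ := by
  refine Submodule.eq_top_iff'.2 fun n ↦ ?_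
  obtain ⟨v, rfl⟩ := Submodule.Quotient.mk_surjective _ n
  refine Submodule.mem_span_pair.2 ⟨v 0, v 1, ?_⟩
  rw [e₁, e₂, ← Submodule.Quotient.mk_smul, ← Submodule.Quotient.mk_smul,
    ← Submodule.Quotient.mk_add]
  congr 1
  ext i
  fin_cases i <;> simp

lemma mk_eq_zero_of_mem_generators {v : Fin 2 → Sring K}
    (hv : v ∈ ({![tElt K, 0], ![0, sElt K], ![sElt K, tElt K]} : Set _)) :
    (Submodule.Quotient.mk v : Nmod K) = 0 :=
  (Submodule.Quotient.mk_eq_zero _).2 (Submodule.subset_span hv)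

lemma smul_e₁ (r : Sring K) : r • e₁ K = Submodule.Quotient.mk ![r, 0] := by
  rw [e₁, ← Submodule.Quotient.mk_smul]
  congr 1
  ext i
  fin_cases i <;> simp

lemma smul_e₂ (r : Sring K) : r • e₂ K = Submodule.Quotient.mk ![0, r] := by
  rw [e₂, ← Submodule.Quotient.mk_smul]
  congr 1
  ext i
  fin_cases i <;> simp

lemma tElt_smul_e₁ : tElt K • e₁ K = 0 := by
  rw [smul_e₁]
  exact mk_eq_zero_of_mem_generators (by simp)

lemma sElt_smul_e₂ : sElt K • e₂ K = 0 := by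
  rw [smul_e₂]
  exact mk_eq_zero_of_mem_generators (by simp)

lemma tElt_smul_e₂ : tElt K • e₂ K = -(sElt K • e₁ K) := by
  rw [eq_neg_iff_add_eq_zero, add_comm, smul_e₁, smul_e₂, ← Submodule.Quotient.mk_add]
  have hsum : ![sElt K, 0] + ![0, tElt K] = ![sElt K, tElt K] := by
    ext i
    fin_cases i <;> simp
  rw [hsum]
  exact mk_eq_zero_of_mem_generators (by simp)

lemma sElt_smul_e₁_ne_zero : sElt K • e₁ K ≠ 0 := by
  rw [smul_e₁, Ne, Submodule.Quotient.mk_eq_zero, Usub, Submodule.mem_span_insert]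
  rintro ⟨a, _, hz, hsa⟩
  obtain ⟨b, _, hc, rfl⟩ := Submodule.mem_span_insert.1 hz
  obtain ⟨c, rfl⟩ := Submodule.mem_span_singleton.1 hc
  have h₀ := congr_fun hsa 0
  have h₁ := congr_fun hsa 1
  simp only [Pi.add_apply, Pi.smul_apply, Matrix.cons_val_zero, Matrix.cons_val_one,
    smul_eq_mul, mul_zero, zero_add] at h₀ h₁
  have hc₁ : c - 1 ∈ mIdeal K :=
    (mem_mIdeal_of_mul_sElt_add_mul_tElt_eq_zero (y := a) (by linear_combination -h₀)).1
  have hc₀ : c ∈ mIdeal K := (mem_mIdeal_of_mul_sElt_add_mul_tElt_eq_zero h₁.symm).2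
  exact mIdeal_isMaximal.ne_top ((Ideal.eq_top_iff_one _).2 (by simpa using sub_mem hc₀ hc₁))

lemma ideal_span_singleton_smul_top (r : Sring K) :
    Ideal.span {r} • (⊤ : Submodule (Sring K) (Nmod K)) =
      Submodule.span (Sring K) {r • e₁ K, r • e₂ K} := by
  rw [← span_e₁_e₂, Submodule.span_smul_span, Set.singleton_smul, Set.smul_set_insert,
    Set.smul_set_singleton]

lemma ideal_span_sElt_smul_top :
    Ideal.span {sElt K} • (⊤ : Submodule (Sring K) (Nmod K)) = Sring K ∙ sElt K • e₁ K := by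
  rw [ideal_span_singleton_smul_top, sElt_smul_e₂, Set.pair_comm, Submodule.span_insert_zero]

lemma ideal_span_tElt_smul_top :
    Ideal.span {tElt K} • (⊤ : Submodule (Sring K) (Nmod K)) = Sring K ∙ sElt K • e₁ K := by
  rw [ideal_span_singleton_smul_top, tElt_smul_e₁, tElt_smul_e₂, Submodule.span_insert_zero,
    ← Set.neg_singleton, Submodule.span_neg]

lemma mIdeal_smul_top :
    mIdeal K • (⊤ : Submodule (Sring K) (Nmod K)) = Sring K ∙ sElt K • e₁ K := by
  rw [mIdeal, Ideal.span_insert, Submodule.sup_smul, ideal_span_sElt_smul_top,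
    ideal_span_tElt_smul_top, sup_idem]

lemma smul_sElt_smul_e₁_eq_zero {r : Sring K} (hr : r ∈ mIdeal K) : r • sElt K • e₁ K = 0 := by
  obtain ⟨a, b, rfl⟩ := Ideal.mem_span_pair.1 hr
  have hrs : (a * sElt K + b * tElt K) * sElt K = 0 := by
    rw [add_mul, mul_assoc, mul_assoc, sElt_mul_sElt, mul_comm (tElt K), sElt_mul_tElt]
    simp
  rw [smul_e₁, ← Submodule.Quotient.mk_smul, ← Submodule.Quotient.mk_zero]
  congr 1
  ext i
  fin_cases i <;> simp [hrs]

end Nmod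

/-- In `N = S²/U` the submodules `sN`, `tN` and `mN = (s,t)N` coincide, and this common
submodule has length 1 (it admits a composition series of length 1 from `⊥` to `⊤`). -/
theorem stmt_7 (K : Type) [Field K] :
    (Ideal.span {sElt K}) • (⊤ : Submodule (Sring K) (Nmod K)) =
        (Ideal.span {tElt K}) • (⊤ : Submodule (Sring K) (Nmod K)) ∧
    (Ideal.span {tElt K}) • (⊤ : Submodule (Sring K) (Nmod K)) =
        mIdeal K • (⊤ : Submodule (Sring K) (Nmod K)) ∧
    ∃ c : CompositionSeries
        (Submodule (Sring K) ↥(mIdeal K • (⊤ : Submodule (Sring K) (Nmod K)))),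
      c.head = ⊥ ∧ c.last = ⊤ ∧ c.length = 1 := by
  have hs := Nmod.ideal_span_sElt_smul_top (K := K)
  have ht := Nmod.ideal_span_tElt_smul_top (K := K)
  have hm := Nmod.mIdeal_smul_top (K := K)
  refine ⟨hs.trans ht.symm, ht.trans hm.symm, ?_⟩
  rw [hm]
  have := isSimpleModule_span_singleton_of_ideal_smul_eq_zero mIdeal_isMaximal
    (Nmod.sElt_smul_e₁_ne_zero (K := K)) fun _ ↦ Nmod.smul_sElt_smul_e₁_eq_zero
  exact exists_compositionSeries_of_isMaximal_bot_top bot_covBy_top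

end
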